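/- Part (6) of Lemma 5: 4·(1 + η₃ + 2η₀ + 3η₁)·(1 + η₁ + 2η₂ + 3η₃) ≡ 2(1−4y)·H + 5p + 1 (mod (4^p − 1)/3). -/
import Mathlib


open Finset

/-- The cyclotomic class `D_i` of order 4 modulo `p` with respect to the
primitive root `θ`: `{θ^(i+4j) mod p : 0 ≤ j < (p-1)/4}`. -/
def cycD (p θ i : ℕ) : Finset ℕ :=
  (Finset.range ((p - 1) / 4)).image fun j => θ ^ (i + 4 * j) % p

/-- `η_i = Σ_{t ∈ D_i} 4^t` as an integer. -/
def eta4 (p θ : ℕ) (i : ℕ) : ℤ := ∑ t ∈ cycD p θ i, (4 : ℤ) ^ t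

/-- `H = η₀ + η₂ − η₁ − η₃`. -/
def Hval (p θ : ℕ) : ℤ := eta4 p θ 0 + eta4 p θ 2 - eta4 p θ 1 - eta4 p θ 3

namespace L5

variable {p θ : ℕ}

def ff (p : ℕ) : ℕ := (p - 1) / 4

def Dz (p θ i : ℕ) : Finset (ZMod p) :=
  (Finset.range (ff p)).image fun j => (θ : ZMod p) ^ (i + 4 * j)

def cz (p θ m k : ℕ) : ℕ := ((Dz p θ m).filter fun z => z + 1 ∈ Dz p θ k).card

lemma p_eq (hp8 : p % 8 = 5) : p = 4 * ff p + 1 := by unfold ff; omega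

lemma ff_odd (hp8 : p % 8 = 5) : ff p % 2 = 1 := by unfold ff; omega

lemma ff_pos (hp8 : p % 8 = 5) : 0 < ff p := by unfold ff; omega

private lemma claim1 (F a b : ℕ) (hF : 0 < F) (hb : b < F) :
    (a + (b + (F - a % F)) % F) % F = b := by
  have h1 : a % F < F := Nat.mod_lt _ hF
  have h2 : a + (b + (F - a % F)) % F ≡ a % F + (b + (F - a % F)) [MOD F] :=
    Nat.ModEq.add (Nat.mod_modEq a F).symm (Nat.mod_modEq _ F)
  have h3 : a % F + (b + (F - a % F)) = b + F := by omega
  have h4 : (b + F) % F = b := by rw [Nat.add_mod_right]; exact Nat.mod_eq_of_lt hb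
  calc (a + (b + (F - a % F)) % F) % F = (a % F + (b + (F - a % F))) % F := h2
    _ = (b + F) % F := by rw [h3]
    _ = b := h4

private lemma claim2 (F m t : ℕ) (hF : 0 < F) (ht : t < 4*F) (h4 : t % 4 = m % 4) :
    (m + 4 * ((t/4 + (F - (m/4) % F)) % F)) % (4*F) = t := by
  set j := (t/4 + (F - (m/4) % F)) % F with hj
  have hb : t/4 < F := by omega
  have hc1 : (m/4 + j) % F = t/4 := claim1 F (m/4) (t/4) hF hb
  have h5 : 4*(m/4+j) ≡ 4*((m/4+j) % F) [MOD 4*F] :=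
    Nat.ModEq.mul_left' 4 (Nat.mod_modEq _ F).symm
  have h6 : m + 4*j ≡ t [MOD 4*F] := by
    calc m + 4*j = 4*(m/4+j) + m%4 := by omega
    _ ≡ 4*((m/4+j)%F) + m%4 [MOD 4*F] := h5.add_right _
    _ = t := by rw [hc1]; omega
  calc (m+4*j) % (4*F) = t % (4*F) := h6
  _ = t := Nat.mod_eq_of_lt ht

section Basic

variable (hp8 : p % 8 = 5) (hθ : IsPrimitiveRoot (θ : ZMod p) (p - 1))

include hθ

lemma orderg : orderOf (θ : ZMod p) = p - 1 := hθ.eq_orderOf.symm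

lemma gpow_congr {a b : ℕ} (h : a % (p - 1) = b % (p - 1)) :
    (θ : ZMod p) ^ a = (θ : ZMod p) ^ b := by
  have ho := orderg hθ
  rw [← pow_mod_orderOf, ho, h, ← ho, pow_mod_orderOf]

include hp8

lemma exp_mem {k m : ℕ} (hm : m % 4 = k % 4) : (θ : ZMod p) ^ k ∈ Dz p θ m := by
  have hF : p - 1 = 4 * ff p := by have := p_eq hp8; omega
  have hFpos : 0 < ff p := ff_pos hp8
  set F := ff p with hFdef
  set t := k % (p - 1) with htdef
  have ht4 : t % 4 = k % 4 := by
    rw [htdef, hF, Nat.mod_mod_of_dvd _ ⟨F, rfl⟩]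
  have htlt : t < 4 * F := by
    rw [htdef, hF]; exact Nat.mod_lt _ (by omega)
  refine Finset.mem_image.mpr ⟨(t / 4 + (F - (m / 4) % F)) % F,
    Finset.mem_range.mpr (Nat.mod_lt _ hFpos), ?_⟩
  apply gpow_congr hθ
  rw [hF]
  rw [claim2 F m t hFpos htlt (by omega), htdef, hF]

lemma mem_Dz_iff {i : ℕ} {z : ZMod p} :
    z ∈ Dz p θ i ↔ ∃ k, (θ : ZMod p) ^ k = z ∧ k % 4 = i % 4 := by
  constructor
  · intro h
    obtain ⟨j, _, rfl⟩ := Finset.mem_image.mp h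
    exact ⟨i + 4*j, rfl, by omega⟩
  · rintro ⟨k, rfl, hk⟩
    exact exp_mem hp8 hθ hk.symm

lemma Dz_mod (i : ℕ) : Dz p θ i = Dz p θ (i % 4) := by
  ext z
  rw [mem_Dz_iff hp8 hθ, mem_Dz_iff hp8 hθ]
  constructor <;> rintro ⟨k, rfl, hk⟩ <;> exact ⟨k, rfl, by omega⟩

lemma mem_mul {i j : ℕ} {z w : ZMod p} (hz : z ∈ Dz p θ i) (hw : w ∈ Dz p θ j) :
    z * w ∈ Dz p θ (i + j) := by
  obtain ⟨k1, rfl, h1⟩ := (mem_Dz_iff hp8 hθ).mp hz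
  obtain ⟨k2, rfl, h2⟩ := (mem_Dz_iff hp8 hθ).mp hw
  rw [← pow_add]
  exact (mem_Dz_iff hp8 hθ).mpr ⟨k1 + k2, rfl, by omega⟩

end Basic

section Basic2

variable (hp : p.Prime) (hp8 : p % 8 = 5) (hθ : IsPrimitiveRoot (θ : ZMod p) (p - 1))

include hp hp8 hθ

lemma mem_ne_zero {i : ℕ} {z : ZMod p} (hz : z ∈ Dz p θ i) : z ≠ 0 := by
  haveI : Fact p.Prime := ⟨hp⟩
  haveI : Fact (1 < p) := ⟨by omega⟩
  obtain ⟨k, rfl, _⟩ := (mem_Dz_iff hp8 hθ).mp hz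
  exact pow_ne_zero _ (hθ.ne_zero (by omega))

lemma mem_inv {i : ℕ} {z : ZMod p} (hz : z ∈ Dz p θ i) : z⁻¹ ∈ Dz p θ (3 * i) := by
  haveI : Fact p.Prime := ⟨hp⟩
  have hz0 : z ≠ 0 := mem_ne_zero hp hp8 hθ hz
  obtain ⟨k, hk, h4⟩ := (mem_Dz_iff hp8 hθ).mp hz
  have hinv : z⁻¹ = z ^ (p - 2) := by
    have h1 : z ^ (p - 2) * z = 1 := by
      have : z ^ (p - 2) * z = z ^ (p - 1) := by
        rw [← pow_succ]; congr 1; omega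
      rw [this, ZMod.pow_card_sub_one_eq_one hz0]
    exact inv_eq_of_mul_eq_one_right ((mul_comm _ _).trans h1)
  rw [hinv, ← hk, ← pow_mul]
  apply (mem_Dz_iff hp8 hθ).mpr
  refine ⟨k * (p - 2), rfl, ?_⟩
  have hp4 : (p - 2) % 4 = 3 := by omega
  rw [Nat.mul_mod, hp4, h4]
  omega

lemma neg_one_mem : (-1 : ZMod p) ∈ Dz p θ 2 := by
  haveI : Fact p.Prime := ⟨hp⟩
  have hF : p - 1 = 4 * ff p := by have := p_eq hp8; omega
  set x := (θ : ZMod p) ^ (2 * ff p) with hx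
  have hsq : x * x = 1 := by
    rw [hx, ← pow_add]
    have : 2 * ff p + 2 * ff p = p - 1 := by omega
    rw [this, hθ.pow_eq_one]
  have hne : x ≠ 1 := by
    apply pow_ne_one_of_lt_orderOf
    · have := ff_pos hp8; omega
    · rw [orderg hθ]; omega
  have : x = -1 := ((mul_self_eq_one_iff.mp hsq).resolve_left hne)
  rw [← this, hx]
  exact exp_mem hp8 hθ (by have := ff_odd hp8; omega)

lemma mem_neg {i : ℕ} {z : ZMod p} (hz : z ∈ Dz p θ i) : -z ∈ Dz p θ (i + 2) := by
  have := mem_mul hp8 hθ hz (neg_one_mem hp hp8 hθ)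
  simpa using this

lemma class_eq {i j : ℕ} {z : ZMod p} (hi : z ∈ Dz p θ i) (hj : z ∈ Dz p θ j) :
    i % 4 = j % 4 := by
  obtain ⟨k1, hk1, h1⟩ := (mem_Dz_iff hp8 hθ).mp hi
  obtain ⟨k2, hk2, h2⟩ := (mem_Dz_iff hp8 hθ).mp hj
  haveI : Fact p.Prime := ⟨hp⟩
  haveI : Fact (1 < p) := ⟨by omega⟩
  have : (θ : ZMod p) ^ k1 = (θ : ZMod p) ^ k2 := by rw [hk1, hk2]
  have key : ∀ a b : ℕ, a ≤ b → (θ : ZMod p) ^ a = (θ : ZMod p) ^ b → (p - 1) ∣ (b - a) := by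
    intro a b hab he
    have hθ0 : (θ : ZMod p) ≠ 0 := hθ.ne_zero (by omega)
    have h1 : (θ : ZMod p) ^ a * (θ : ZMod p) ^ (b - a) = (θ : ZMod p) ^ a * 1 := by
      rw [mul_one, ← pow_add]
      rw [show a + (b - a) = b by omega, he]
    have h2 : (θ : ZMod p) ^ (b - a) = 1 := mul_left_cancel₀ (pow_ne_zero _ hθ0) h1
    have := orderOf_dvd_of_pow_eq_one h2
    rwa [orderg hθ] at this
  have hF : p - 1 = 4 * ff p := by have := p_eq hp8; omega
  rcases le_total k1 k2 with hle | hle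
  · obtain ⟨c, hc⟩ := key k1 k2 hle this
    have hc' : k2 - k1 = 4 * (ff p * c) := by rw [hc, hF]; ring
    omega
  · obtain ⟨c, hc⟩ := key k2 k1 hle this.symm
    have hc' : k1 - k2 = 4 * (ff p * c) := by rw [hc, hF]; ring
    omega

omit hp in
lemma card_Dz (i : ℕ) : (Dz p θ i).card = ff p := by
  rw [Dz_mod hp8 hθ i, Dz]
  rw [Finset.card_image_of_injOn, Finset.card_range]
  intro j1 hj1 j2 hj2 he
  simp only [Finset.coe_range, Set.mem_Iio] at hj1 hj2
  have hF : p - 1 = 4 * ff p := by have := p_eq hp8; omega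
  have hi4 : i % 4 < 4 := Nat.mod_lt _ (by omega)
  have := hθ.pow_inj (by omega : i % 4 + 4*j1 < p - 1) (by omega : i % 4 + 4*j2 < p - 1) he
  omega

lemma exists_mem {z : ZMod p} (hz : z ≠ 0) : ∃ i < 4, z ∈ Dz p θ i := by
  haveI : Fact p.Prime := ⟨hp⟩
  haveI : Fact (1 < p) := ⟨by omega⟩
  have hcard : ((Finset.range (p-1)).image fun k => (θ : ZMod p) ^ k).card = p - 1 := by
    rw [Finset.card_image_of_injOn, Finset.card_range]
    intro k1 hk1 k2 hk2 he
    simp only [Finset.coe_range, Set.mem_Iio] at hk1 hk2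
    exact hθ.pow_inj hk1 hk2 he
  have hsub : ((Finset.range (p-1)).image fun k => (θ : ZMod p) ^ k) ⊆ Finset.univ.erase 0 := by
    intro w hw
    obtain ⟨k, _, rfl⟩ := Finset.mem_image.mp hw
    exact Finset.mem_erase.mpr ⟨pow_ne_zero _ (hθ.ne_zero (by omega)), Finset.mem_univ _⟩
  have hcard2 : (Finset.univ.erase (0 : ZMod p)).card = p - 1 := by
    rw [Finset.card_erase_of_mem (Finset.mem_univ _), Finset.card_univ, ZMod.card]
  have heq := Finset.eq_of_subset_of_card_le hsub (by omega)
  have hz' : z ∈ ((Finset.range (p-1)).image fun k => (θ : ZMod p) ^ k) := by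
    rw [heq]; exact Finset.mem_erase.mpr ⟨hz, Finset.mem_univ _⟩
  obtain ⟨k, _, rfl⟩ := Finset.mem_image.mp hz'
  exact ⟨k % 4, Nat.mod_lt _ (by omega), exp_mem hp8 hθ (Nat.mod_mod_of_dvd k (dvd_refl 4))⟩

end Basic2

section Count

variable (hp : p.Prime) (hp8 : p % 8 = 5) (hθ : IsPrimitiveRoot (θ : ZMod p) (p - 1))

include hp hp8 hθ

omit hp in
lemma Dz_congr {i j : ℕ} (h : i % 4 = j % 4) : Dz p θ i = Dz p θ j := by
  rw [Dz_mod hp8 hθ i, Dz_mod hp8 hθ j, h]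

omit hp hp8 hθ in
lemma cz_congr {m m' k k' : ℕ} (hp8 : p % 8 = 5) (hθ : IsPrimitiveRoot (θ : ZMod p) (p - 1))
    (h1 : m % 4 = m' % 4) (h2 : k % 4 = k' % 4) : cz p θ m k = cz p θ m' k' := by
  unfold cz
  rw [Dz_congr hp8 hθ h1, Dz_congr hp8 hθ h2]

lemma neg_one_mem_iff {m : ℕ} (hm : m < 4) : (-1 : ZMod p) ∈ Dz p θ m ↔ m = 2 := by
  constructor
  · intro h
    have := class_eq hp hp8 hθ h (neg_one_mem hp hp8 hθ)
    omega
  · rintro rfl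
    exact neg_one_mem hp hp8 hθ

lemma row_sum {m : ℕ} (hm : m < 4) :
    cz p θ m 0 + cz p θ m 1 + cz p θ m 2 + cz p θ m 3 + (if m = 2 then 1 else 0) = ff p := by
  classical
  have hpt : ∀ z ∈ Dz p θ m,
      ((((if z + 1 ∈ Dz p θ 0 then (1:ℕ) else 0) + (if z + 1 ∈ Dz p θ 1 then 1 else 0))
       + (if z + 1 ∈ Dz p θ 2 then 1 else 0)) + (if z + 1 ∈ Dz p θ 3 then 1 else 0))
       + (if z = -1 then 1 else 0) = 1 := by
    intro z hz
    by_cases h0 : z = -1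
    · subst h0
      have he : (-1 : ZMod p) + 1 = 0 := by ring
      rw [he]
      have h01 : ∀ k, (0 : ZMod p) ∉ Dz p θ k := fun k hk => (mem_ne_zero hp hp8 hθ hk) rfl
      simp [h01]
    · have hz1 : z + 1 ≠ 0 := fun h => h0 (by linear_combination (h : z+1 = 0))
      obtain ⟨i, hi4, hmem⟩ := exists_mem hp hp8 hθ hz1
      have huniq : ∀ j, j < 4 → ((z + 1 ∈ Dz p θ j) ↔ j = i) := by
        intro j hj
        constructor
        · intro h
          have := class_eq hp hp8 hθ h hmem
          omega
        · rintro rfl; exact hmem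
      rw [if_neg h0]
      simp only [huniq 0 (by norm_num), huniq 1 (by norm_num), huniq 2 (by norm_num),
        huniq 3 (by norm_num)]
      interval_cases i <;> simp
  have expand : ∑ z ∈ Dz p θ m,
      (((((if z + 1 ∈ Dz p θ 0 then (1:ℕ) else 0) + (if z + 1 ∈ Dz p θ 1 then 1 else 0))
       + (if z + 1 ∈ Dz p θ 2 then 1 else 0)) + (if z + 1 ∈ Dz p θ 3 then 1 else 0))
       + (if z = -1 then 1 else 0))
      = cz p θ m 0 + cz p θ m 1 + cz p θ m 2 + cz p θ m 3 + (if m = 2 then 1 else 0) := by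
    rw [Finset.sum_add_distrib, Finset.sum_add_distrib, Finset.sum_add_distrib,
      Finset.sum_add_distrib]
    rw [Finset.sum_boole, Finset.sum_boole, Finset.sum_boole, Finset.sum_boole,
      Finset.sum_ite_eq' (Dz p θ m) (-1 : ZMod p) (fun _ => (1:ℕ))]
    simp only [Nat.cast_id]
    rw [if_congr (neg_one_mem_iff hp hp8 hθ hm) rfl rfl]
    rfl
  calc cz p θ m 0 + cz p θ m 1 + cz p θ m 2 + cz p θ m 3 + (if m = 2 then 1 else 0)
      = ∑ z ∈ Dz p θ m, (1:ℕ) := by rw [← expand]; exact Finset.sum_congr rfl hpt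
    _ = ff p := by rw [Finset.sum_const, card_Dz hp8 hθ m, smul_eq_mul, mul_one]

lemma R1 (m k : ℕ) : cz p θ m k = cz p θ (3*m) (k + 3*m) := by
  classical
  haveI : Fact p.Prime := ⟨hp⟩
  unfold cz
  refine Finset.card_bij' (fun z _ => z⁻¹) (fun w _ => w⁻¹) ?hi ?hj ?li ?ri
  case hi =>
    intro z hz
    obtain ⟨hz1, hz2⟩ := Finset.mem_filter.mp hz
    have hz0 : z ≠ 0 := mem_ne_zero hp hp8 hθ hz1
    refine Finset.mem_filter.mpr ⟨mem_inv hp hp8 hθ hz1, ?_⟩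
    have he : z⁻¹ + 1 = z⁻¹ * (z + 1) := by field_simp; ring
    rw [he]
    have := mem_mul hp8 hθ (mem_inv hp hp8 hθ hz1) hz2
    rwa [Dz_congr hp8 hθ (show (3*m + k) % 4 = (k + 3*m) % 4 by omega)] at this
  case hj =>
    intro w hw
    obtain ⟨hw1, hw2⟩ := Finset.mem_filter.mp hw
    have hw0 : w ≠ 0 := mem_ne_zero hp hp8 hθ hw1
    refine Finset.mem_filter.mpr ⟨?_, ?_⟩
    · have := mem_inv hp hp8 hθ hw1
      rwa [Dz_congr hp8 hθ (show (3*(3*m)) % 4 = m % 4 by omega)] at this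
    · have he : w⁻¹ + 1 = w⁻¹ * (w + 1) := by field_simp; ring
      rw [he]
      have := mem_mul hp8 hθ (mem_inv hp hp8 hθ hw1) hw2
      rwa [Dz_congr hp8 hθ (show (3*(3*m) + (k + 3*m)) % 4 = k % 4 by omega)] at this
  case li => intro z hz; exact inv_inv z
  case ri => intro w hw; exact inv_inv w

lemma R2 (m k : ℕ) : cz p θ m k = cz p θ (k + 2) (m + 2) := by
  classical
  haveI : Fact p.Prime := ⟨hp⟩
  unfold cz
  refine Finset.card_bij' (fun z _ => -(1 + z)) (fun w _ => -(1 + w)) ?hi ?hj ?li ?ri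
  case hi =>
    intro z hz
    obtain ⟨hz1, hz2⟩ := Finset.mem_filter.mp hz
    refine Finset.mem_filter.mpr ⟨?_, ?_⟩
    · have := mem_neg hp hp8 hθ hz2
      have he : -(z + 1) = -(1 + z) := by ring
      rwa [he] at this
    · have := mem_neg hp hp8 hθ hz1
      have he : -z = -(1 + z) + 1 := by ring
      rwa [he] at this
  case hj =>
    intro w hw
    obtain ⟨hw1, hw2⟩ := Finset.mem_filter.mp hw
    refine Finset.mem_filter.mpr ⟨?_, ?_⟩
    · have := mem_neg hp hp8 hθ hw2
      have he : -(w + 1) = -(1 + w) := by ring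
      rw [he] at this
      rwa [Dz_congr hp8 hθ (show (m + 2 + 2) % 4 = m % 4 by omega)] at this
    · have := mem_neg hp hp8 hθ hw1
      have he : -w = -(1 + w) + 1 := by ring
      rw [he] at this
      rwa [Dz_congr hp8 hθ (show (k + 2 + 2) % 4 = k % 4 by omega)] at this
  case li => intro z hz; ring
  case ri => intro w hw; ring

-- class equalities, with A = cz 0 0, B = cz 0 1, C = cz 0 2, D = cz 0 3, E = cz 1 0
lemma cz22 : cz p θ 2 2 = cz p θ 0 0 := by
  have h := R2 hp hp8 hθ 2 2
  rw [h]
  exact cz_congr hp8 hθ (by norm_num) (by norm_num)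

lemma cz20 : cz p θ 2 0 = cz p θ 0 0 := by
  have h := R1 hp hp8 hθ 2 0
  rw [h, cz_congr hp8 hθ (show (3*2) % 4 = 2 % 4 by norm_num) (show (0 + 3*2) % 4 = 2 % 4 by norm_num)]
  exact cz22 hp hp8 hθ

lemma cz32 : cz p θ 3 2 = cz p θ 0 1 := (R2 hp hp8 hθ 0 1).symm

lemma cz13 : cz p θ 1 3 = cz p θ 0 1 := by
  have h := R1 hp hp8 hθ 1 3
  rw [h, cz_congr hp8 hθ (show (3*1) % 4 = 3 % 4 by norm_num) (show (3 + 3*1) % 4 = 2 % 4 by norm_num)]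
  exact cz32 hp hp8 hθ

lemma cz12 : cz p θ 1 2 = cz p θ 0 3 := by
  have h := R2 hp hp8 hθ 1 2
  rw [h]
  exact cz_congr hp8 hθ (by norm_num) (by norm_num)

lemma cz31 : cz p θ 3 1 = cz p θ 0 3 := by
  have h := R1 hp hp8 hθ 3 1
  rw [h, cz_congr hp8 hθ (show (3*3) % 4 = 1 % 4 by norm_num) (show (1 + 3*3) % 4 = 2 % 4 by norm_num)]
  exact cz12 hp hp8 hθ

lemma cz33 : cz p θ 3 3 = cz p θ 1 0 := by
  have h := R1 hp hp8 hθ 1 0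
  rw [h, cz_congr hp8 hθ (show (3*1) % 4 = 3 % 4 by norm_num) (show (0 + 3*1) % 4 = 3 % 4 by norm_num)]

lemma cz23 : cz p θ 2 3 = cz p θ 1 0 := (R2 hp hp8 hθ 1 0).symm

lemma cz11 : cz p θ 1 1 = cz p θ 1 0 := by
  have h := R2 hp hp8 hθ 1 1
  rw [h, cz_congr hp8 hθ (show (1+2) % 4 = 3 % 4 by norm_num) (show (1+2) % 4 = 3 % 4 by norm_num)]
  exact cz33 hp hp8 hθ

lemma cz30 : cz p θ 3 0 = cz p θ 1 0 := by
  have h := R1 hp hp8 hθ 1 1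
  rw [cz11 hp hp8 hθ] at h
  rw [cz_congr hp8 hθ (show (3:ℕ) % 4 = (3*1) % 4 by norm_num) (show (0:ℕ) % 4 = (1 + 3*1) % 4 by norm_num)]
  exact h.symm

lemma cz21 : cz p θ 2 1 = cz p θ 1 0 := by
  have h := R2 hp hp8 hθ 2 1
  rw [h, cz_congr hp8 hθ (show (1+2) % 4 = 3 % 4 by norm_num) (show (2+2) % 4 = 0 % 4 by norm_num)]
  exact cz30 hp hp8 hθ

omit hp in
lemma cz_le (m k : ℕ) : cz p θ m k ≤ ff p := by
  calc cz p θ m k ≤ (Dz p θ m).card := Finset.card_filter_le _ _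
    _ = ff p := card_Dz hp8 hθ m

end Count

/-- `Nn p = (4^p-1)/3` as the geometric sum. -/
def Nn (p : ℕ) : ℕ := ∑ i ∈ Finset.range p, 4^i

lemma three_Nn (n : ℕ) : 3 * Nn n + 1 = 4^n := by
  induction n with
  | zero => simp [Nn]
  | succ m ih =>
    have h4 : (4:ℕ)^(m+1) = 4*4^m := by rw [pow_succ]; ring
    unfold Nn at ih ⊢
    rw [Finset.sum_range_succ]
    omega

def ee (p : ℕ) (z : ZMod p) : ZMod (Nn p) := 4 ^ z.val

def etaR (p θ i : ℕ) : ZMod (Nn p) := ∑ z ∈ Dz p θ i, ee p z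

lemma four_pow_p : (4 : ZMod (Nn p))^p = 1 := by
  have h : ((4^p : ℕ) : ZMod (Nn p)) = ((3 * Nn p + 1 : ℕ) : ZMod (Nn p)) := by
    rw [three_Nn]
  push_cast at h
  rw [ZMod.natCast_self] at h
  rw [h]; ring

lemma four_pow_mod (n : ℕ) : (4 : ZMod (Nn p))^(n % p) = 4^n := by
  conv_rhs => rw [← Nat.div_add_mod n p]
  rw [pow_add, pow_mul, four_pow_p, one_pow, one_mul]

lemma ee_add (hp8 : p % 8 = 5) (z w : ZMod p) : ee p (z + w) = ee p z * ee p w := by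
  haveI : NeZero p := ⟨by omega⟩
  unfold ee
  rw [ZMod.val_add, four_pow_mod, pow_add]

lemma ee_zero (hp8 : p % 8 = 5) : ee p (0 : ZMod p) = 1 := by
  haveI : NeZero p := ⟨by omega⟩
  unfold ee
  rw [ZMod.val_zero, pow_zero]

section Sums

variable (hp : p.Prime) (hp8 : p % 8 = 5) (hθ : IsPrimitiveRoot (θ : ZMod p) (p - 1))

include hp hp8 hθ

lemma Dz_disjoint {i j : ℕ} (hi : i < 4) (hj : j < 4) (hij : i ≠ j) :
    Disjoint (Dz p θ i) (Dz p θ j) := by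
  rw [Finset.disjoint_left]
  intro z hzi hzj
  have := class_eq hp hp8 hθ hzi hzj
  omega

lemma sum_etaR : etaR p θ 0 + etaR p θ 1 + etaR p θ 2 + etaR p θ 3 + 1 = 0 := by
  classical
  haveI : NeZero p := ⟨by omega⟩
  have hunion : Dz p θ 0 ∪ Dz p θ 1 ∪ Dz p θ 2 ∪ Dz p θ 3 = Finset.univ.erase (0 : ZMod p) := by
    ext z
    simp only [Finset.mem_union, Finset.mem_erase, Finset.mem_univ, and_true]
    constructor
    · intro h
      rcases h with ((h | h) | h) | h <;> exact mem_ne_zero hp hp8 hθ h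
    · intro hz
      obtain ⟨i, hi4, hmem⟩ := exists_mem hp hp8 hθ hz
      interval_cases i
      · exact Or.inl (Or.inl (Or.inl hmem))
      · exact Or.inl (Or.inl (Or.inr hmem))
      · exact Or.inl (Or.inr hmem)
      · exact Or.inr hmem
  have d01 := Dz_disjoint hp hp8 hθ (by norm_num) (by norm_num) (by norm_num : (0:ℕ) ≠ 1)
  have d02 := Dz_disjoint hp hp8 hθ (by norm_num) (by norm_num) (by norm_num : (0:ℕ) ≠ 2)
  have d12 := Dz_disjoint hp hp8 hθ (by norm_num) (by norm_num) (by norm_num : (1:ℕ) ≠ 2)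
  have d03 := Dz_disjoint hp hp8 hθ (by norm_num) (by norm_num) (by norm_num : (0:ℕ) ≠ 3)
  have d13 := Dz_disjoint hp hp8 hθ (by norm_num) (by norm_num) (by norm_num : (1:ℕ) ≠ 3)
  have d23 := Dz_disjoint hp hp8 hθ (by norm_num) (by norm_num) (by norm_num : (2:ℕ) ≠ 3)
  have hsum : etaR p θ 0 + etaR p θ 1 + etaR p θ 2 + etaR p θ 3
      = ∑ z ∈ Finset.univ.erase (0 : ZMod p), ee p z := by
    rw [← hunion]
    rw [Finset.sum_union (by
      refine Finset.disjoint_union_left.mpr ⟨Finset.disjoint_union_left.mpr ⟨d03, d13⟩, d23⟩)]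
    rw [Finset.sum_union (by refine Finset.disjoint_union_left.mpr ⟨d02, d12⟩)]
    rw [Finset.sum_union d01]
    rfl
  have htot : ∑ z ∈ Finset.univ.erase (0 : ZMod p), ee p z + ee p 0 = ∑ z : ZMod p, ee p z :=
    Finset.sum_erase_add _ _ (Finset.mem_univ _)
  have huniv : ∑ z : ZMod p, ee p z = ((Nn p : ℕ) : ZMod (Nn p)) := by
    rw [ZMod.natCast_self]
    have hbij : ∑ z : ZMod p, ee p z = ∑ t ∈ Finset.range p, (4 : ZMod (Nn p))^t := by
      refine Finset.sum_nbij' (fun z => z.val) (fun t => (t : ZMod p)) ?_ ?_ ?_ ?_ ?_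
      · intro z _; exact Finset.mem_range.mpr (ZMod.val_lt z)
      · intro t _; exact Finset.mem_univ _
      · intro z _; exact ZMod.natCast_rightInverse z
      · intro t ht; exact ZMod.val_natCast_of_lt (Finset.mem_range.mp ht)
      · intro z _; rfl
    rw [hbij]
    have : ((Nn p : ℕ) : ZMod (Nn p)) = ∑ t ∈ Finset.range p, (4 : ZMod (Nn p))^t := by
      unfold Nn; push_cast; rfl
    rw [ZMod.natCast_self] at this
    rw [← this]
  rw [hsum]
  have he0 : ee p (0 : ZMod p) = 1 := ee_zero hp8
  calc ∑ z ∈ Finset.univ.erase (0 : ZMod p), ee p z + 1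
      = ∑ z ∈ Finset.univ.erase (0 : ZMod p), ee p z + ee p 0 := by rw [he0]
    _ = ∑ z : ZMod p, ee p z := htot
    _ = 0 := by rw [huniv, ZMod.natCast_self]

lemma sum_scale {i k : ℕ} {v : ZMod p} (hv : v ∈ Dz p θ k) :
    ∑ z ∈ Dz p θ i, ee p (z * v) = etaR p θ ((i + k) % 4) := by
  haveI : Fact p.Prime := ⟨hp⟩
  have hv0 : v ≠ 0 := mem_ne_zero hp hp8 hθ hv
  unfold etaR
  refine Finset.sum_nbij' (fun z => z * v) (fun w => w * v⁻¹) ?_ ?_ ?_ ?_ ?_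
  · intro z hz
    show z * v ∈ _
    have := mem_mul hp8 hθ hz hv
    rwa [Dz_mod hp8 hθ (i + k)] at this
  · intro w hw
    show w * v⁻¹ ∈ _
    have hvi := mem_inv hp hp8 hθ hv
    have := mem_mul hp8 hθ hw hvi
    rwa [Dz_congr hp8 hθ (show ((i + k) % 4 + 3*k) % 4 = i % 4 by omega)] at this
  · intro z _
    show z * v * v⁻¹ = z
    exact mul_inv_cancel_right₀ hv0 z
  · intro w _
    show w * v⁻¹ * v = w
    exact inv_mul_cancel_right₀ hv0 w
  · intro z _; rfl

lemma prod_formula (i j : ℕ) (hi : i < 4) (hj : j < 4) :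
    etaR p θ i * etaR p θ j =
      (if (j + 3*i) % 4 = 2 then ((ff p : ℕ) : ZMod (Nn p)) else 0)
      + ∑ k ∈ Finset.range 4, ((cz p θ ((j + 3*i) % 4) k : ℕ) : ZMod (Nn p)) * etaR p θ ((i + k) % 4) := by
  classical
  haveI : Fact p.Prime := ⟨hp⟩
  haveI : NeZero p := ⟨by omega⟩
  set m := (j + 3*i) % 4 with hm
  have hm4 : m < 4 := Nat.mod_lt _ (by norm_num)
  -- step 1: expand double sum
  have step1 : etaR p θ i * etaR p θ j = ∑ z ∈ Dz p θ i, ∑ w ∈ Dz p θ j, ee p (z + w) := by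
    unfold etaR
    rw [Finset.sum_mul_sum]
    exact Finset.sum_congr rfl fun z _ => Finset.sum_congr rfl fun w _ => (ee_add hp8 z w).symm
  -- step 2: reindex inner sum
  have step2 : ∀ z ∈ Dz p θ i, ∑ w ∈ Dz p θ j, ee p (z + w)
      = ∑ u ∈ Dz p θ m, ee p (z * (1 + u)) := by
    intro z hz
    have hz0 : z ≠ 0 := mem_ne_zero hp hp8 hθ hz
    refine Finset.sum_nbij' (fun w => z⁻¹ * w) (fun u => z * u) ?_ ?_ ?_ ?_ ?_
    · intro w hw
      show z⁻¹ * w ∈ _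
      have hzi := mem_inv hp hp8 hθ hz
      have := mem_mul hp8 hθ hzi hw
      rwa [Dz_congr hp8 hθ (show (3*i + j) % 4 = m % 4 by omega)] at this
    · intro u hu
      show z * u ∈ _
      have := mem_mul hp8 hθ hz hu
      rwa [Dz_congr hp8 hθ (show (i + m) % 4 = j % 4 by omega)] at this
    · intro w _
      show z * (z⁻¹ * w) = w
      exact mul_inv_cancel_left₀ hz0 w
    · intro u _
      show z⁻¹ * (z * u) = u
      exact inv_mul_cancel_left₀ hz0 u
    · intro w _
      show ee p (z + w) = ee p (z * (1 + z⁻¹ * w))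
      congr 1
      rw [mul_add, mul_one, mul_inv_cancel_left₀ hz0]
  -- step 3: pointwise evaluation of ∑_z ee (z*(1+u))
  have step3 : ∀ u ∈ Dz p θ m, ∑ z ∈ Dz p θ i, ee p (z * (1 + u))
      = (if u = -1 then ((ff p : ℕ) : ZMod (Nn p)) else 0)
        + ∑ k ∈ Finset.range 4, (if u + 1 ∈ Dz p θ k then etaR p θ ((i + k) % 4) else 0) := by
    intro u hu
    by_cases hu1 : u = -1
    · subst hu1
      have hrw : ∀ z ∈ Dz p θ i, ee p (z * (1 + -1)) = 1 := by
        intro z _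
        rw [show (1 : ZMod p) + -1 = 0 by ring, mul_zero, ee_zero hp8]
      rw [Finset.sum_congr rfl hrw, Finset.sum_const, card_Dz hp8 hθ, if_pos rfl]
      have h0 : ∀ k ∈ Finset.range 4,
          (if (-1 : ZMod p) + 1 ∈ Dz p θ k then etaR p θ ((i + k) % 4) else 0) = 0 := by
        intro k _
        rw [if_neg]
        intro hkmem
        exact mem_ne_zero hp hp8 hθ hkmem (by ring)
      rw [Finset.sum_congr rfl h0, Finset.sum_const_zero, add_zero, nsmul_eq_mul, mul_one]
    · have hv0 : u + 1 ≠ 0 := by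
        intro h
        exact hu1 (by linear_combination (h : u + 1 = 0))
      obtain ⟨k0, hk04, hk0⟩ := exists_mem hp hp8 hθ hv0
      have hlhs : ∑ z ∈ Dz p θ i, ee p (z * (1 + u)) = etaR p θ ((i + k0) % 4) := by
        have hcomm : ∑ z ∈ Dz p θ i, ee p (z * (1 + u)) = ∑ z ∈ Dz p θ i, ee p (z * (u + 1)) := by
          refine Finset.sum_congr rfl fun z _ => ?_
          rw [add_comm 1 u]
        rw [hcomm]
        exact sum_scale hp hp8 hθ hk0
      rw [hlhs, if_neg hu1, zero_add]
      rw [Finset.sum_eq_single_of_mem k0 (Finset.mem_range.mpr hk04)]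
      · rw [if_pos hk0]
      · intro k hk hkne
        rw [if_neg]
        intro hmem
        have := class_eq hp hp8 hθ hmem hk0
        have hk4 := Finset.mem_range.mp hk
        omega
  -- assemble
  rw [step1]
  rw [Finset.sum_congr rfl step2, Finset.sum_comm]
  rw [Finset.sum_congr rfl step3]
  rw [Finset.sum_add_distrib]
  congr 1
  · rw [Finset.sum_ite_eq' (Dz p θ m) (-1 : ZMod p) (fun _ => ((ff p : ℕ) : ZMod (Nn p)))]
    by_cases hmem : (-1 : ZMod p) ∈ Dz p θ m
    · rw [if_pos hmem, if_pos ((neg_one_mem_iff hp hp8 hθ hm4).mp hmem)]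
    · rw [if_neg hmem, if_neg (fun h => hmem (by rw [(h : m = 2)]; exact neg_one_mem hp hp8 hθ))]
  · rw [Finset.sum_comm]
    refine Finset.sum_congr rfl fun k _ => ?_
    rw [Finset.sum_ite, Finset.sum_const_zero, add_zero, Finset.sum_const, nsmul_eq_mul]
    rfl

end Sums

/-- Uniqueness of two-square decompositions of an odd positive prime: odd parts agree squared. -/
lemma two_sq_unique {P a b c d : ℤ} (hpr : Prime P) (hpos : 0 < P) (hodd : P % 2 = 1)
    (h1 : a^2 + b^2 = P) (h2 : c^2 + d^2 = P) (ha : a % 2 = 1) (hc : c % 2 = 1) :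
    a^2 = c^2 := by
  have key : (a*d - b*c) * (a*d + b*c) = P * (a^2 - c^2) := by
    linear_combination a^2 * h2 - c^2 * h1
  have hdvd : P ∣ (a*d - b*c) * (a*d + b*c) := ⟨a^2 - c^2, key⟩
  have done1 : a*d - b*c = 0 ∨ a*d + b*c = 0 → a^2 = c^2 := by
    rintro (h | h)
    · have h0 : P * (a^2 - c^2) = 0 := by rw [← key, h, zero_mul]
      have := (mul_eq_zero.mp h0).resolve_left (by positivity)
      linarith
    · have h0 : P * (a^2 - c^2) = 0 := by rw [← key, h, mul_zero]
      have := (mul_eq_zero.mp h0).resolve_left (by positivity)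
      linarith
  have done2 : a*c + b*d = 0 ∨ a*c - b*d = 0 → a^2 = c^2 := by
    have pq : (a*c + b*d) * (a*c - b*d) = P * (a^2 + c^2 - P) := by
      linear_combination (c^2 - P) * h1 - b^2 * h2
    have final : a^2 + c^2 - P = 0 → a^2 = c^2 := by
      intro hsum
      obtain ⟨m, hm⟩ : ∃ m, a = 2*m + 1 := ⟨a / 2, by omega⟩
      obtain ⟨n, hn⟩ : ∃ n, c = 2*n + 1 := ⟨c / 2, by omega⟩
      have : P = 2 * (2*(m*m) + 2*m + 2*(n*n) + 2*n + 1) := by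
        rw [← show a^2 + c^2 = P by linarith, hm, hn]; ring
      omega
    rintro (h | h)
    · rw [h, zero_mul] at pq
      exact final (by
        have := (mul_eq_zero.mp pq.symm).resolve_left (by positivity)
        linarith)
    · rw [h, mul_zero] at pq
      exact final (by
        have := (mul_eq_zero.mp pq.symm).resolve_left (by positivity)
        linarith)
  rcases hpr.dvd_mul.mp hdvd with hP1 | hP1
  · obtain ⟨k, hk⟩ := hP1
    have lag1 : (a*c + b*d)^2 + (a*d - b*c)^2 = P^2 := by
      linear_combination (c^2 + d^2) * h1 + P * h2
    have hk2 : (a*c + b*d)^2 = P^2 * (1 - k^2) := by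
      linear_combination lag1 - (a*d - b*c + P*k) * hk
    have hk1 : k^2 ≤ 1 := by nlinarith [sq_nonneg (a*c + b*d), mul_pos hpos hpos]
    have hkb1 : -1 ≤ k := by nlinarith
    have hkb2 : k ≤ 1 := by nlinarith
    interval_cases k
    · refine done2 (Or.inl (sq_eq_zero_iff.mp ?_))
      rw [hk2]; ring
    · exact done1 (Or.inl (by linarith))
    · refine done2 (Or.inl (sq_eq_zero_iff.mp ?_))
      rw [hk2]; ring
  · obtain ⟨k, hk⟩ := hP1
    have lag2 : (a*c - b*d)^2 + (a*d + b*c)^2 = P^2 := by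
      linear_combination (c^2 + d^2) * h1 + P * h2
    have hk2 : (a*c - b*d)^2 = P^2 * (1 - k^2) := by
      linear_combination lag2 - (a*d + b*c + P*k) * hk
    have hk1 : k^2 ≤ 1 := by nlinarith [sq_nonneg (a*c - b*d), mul_pos hpos hpos]
    have hkb1 : -1 ≤ k := by nlinarith
    have hkb2 : k ≤ 1 := by nlinarith
    interval_cases k
    · refine done2 (Or.inr (sq_eq_zero_iff.mp ?_))
      rw [hk2]; ring
    · exact done1 (Or.inr (by linarith))
    · refine done2 (Or.inr (sq_eq_zero_iff.mp ?_))
      rw [hk2]; ring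

lemma pow_grow (F : ℕ) (hF : 1 ≤ F) : 40*F^2 + 16*F + 2 < 256^F := by
  induction F, hF using Nat.le_induction with
  | base => norm_num
  | succ n hn ih =>
    have h1 : (256:ℕ)^(n+1) = 256 * 256^n := by rw [pow_succ]; ring
    nlinarith [ih, hn]

section Quad

variable (hp : p.Prime) (hp8 : p % 8 = 5) (hθ : IsPrimitiveRoot (θ : ZMod p) (p - 1))

include hp hp8 hθ

set_option maxHeartbeats 2000000 in
/-- The key quadratic identity: `(2f-1-8E)² + (2D-2B)² = p`. -/
lemma key_sq :
    (2*((ff p : ℕ) : ℤ) - 1 - 8*((cz p θ 1 0 : ℕ) : ℤ))^2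
      + (2*((cz p θ 0 3 : ℕ) : ℤ) - 2*((cz p θ 0 1 : ℕ) : ℤ))^2 = (p : ℤ) := by
  classical
  haveI : Fact p.Prime := ⟨hp⟩
  have h00 := prod_formula hp hp8 hθ 0 0 (by norm_num) (by norm_num)
  have h01 := prod_formula hp hp8 hθ 0 1 (by norm_num) (by norm_num)
  have h02 := prod_formula hp hp8 hθ 0 2 (by norm_num) (by norm_num)
  have h03 := prod_formula hp hp8 hθ 0 3 (by norm_num) (by norm_num)
  have h11 := prod_formula hp hp8 hθ 1 1 (by norm_num) (by norm_num)
  have h12 := prod_formula hp hp8 hθ 1 2 (by norm_num) (by norm_num)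
  have h13 := prod_formula hp hp8 hθ 1 3 (by norm_num) (by norm_num)
  have h22 := prod_formula hp hp8 hθ 2 2 (by norm_num) (by norm_num)
  have h23 := prod_formula hp hp8 hθ 2 3 (by norm_num) (by norm_num)
  have h33 := prod_formula hp hp8 hθ 3 3 (by norm_num) (by norm_num)
  norm_num [Finset.sum_range_succ] at h00 h01 h02 h03 h11 h12 h13 h22 h23 h33
  rw [cz11 hp hp8 hθ, cz12 hp hp8 hθ, cz13 hp hp8 hθ] at h01 h12 h23
  rw [cz20 hp hp8 hθ, cz21 hp hp8 hθ, cz22 hp hp8 hθ, cz23 hp hp8 hθ] at h02 h13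
  rw [cz30 hp hp8 hθ, cz31 hp hp8 hθ, cz32 hp hp8 hθ, cz33 hp hp8 hθ] at h03
  have hσ := sum_etaR hp hp8 hθ
  have r0 := row_sum hp hp8 hθ (show (0:ℕ) < 4 by norm_num)
  have r1 := row_sum hp hp8 hθ (show (1:ℕ) < 4 by norm_num)
  have r2 := row_sum hp hp8 hθ (show (2:ℕ) < 4 by norm_num)
  norm_num at r0 r1 r2
  rw [cz11 hp hp8 hθ, cz12 hp hp8 hθ, cz13 hp hp8 hθ] at r1
  rw [cz20 hp hp8 hθ, cz21 hp hp8 hθ, cz22 hp hp8 hθ, cz23 hp hp8 hθ] at r2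
  have r0R := congrArg (fun n : ℕ => (n : ZMod (Nn p))) r0
  have r1R := congrArg (fun n : ℕ => (n : ZMod (Nn p))) r1
  have r2R := congrArg (fun n : ℕ => (n : ZMod (Nn p))) r2
  push_cast at r0R r1R r2R
  have t1 : (etaR p θ 0-etaR p θ 2)^2 + (etaR p θ 1-etaR p θ 3)^2 = -(4*((ff p : ℕ) : ZMod (Nn p))+1) := by
    linear_combination h00 - 2*h02 + h11 - 2*h13 + h22 + h33
      + (etaR p θ 0+etaR p θ 1+etaR p θ 2+etaR p θ 3)*r0R - (etaR p θ 0+etaR p θ 1+etaR p θ 2+etaR p θ 3)*r2R + hσ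
  have t2 : (etaR p θ 0-etaR p θ 2)^2 - (etaR p θ 1-etaR p θ 3)^2 = -(2*((ff p : ℕ) : ZMod (Nn p)) - 1 - 8*((cz p θ 1 0 : ℕ) : ZMod (Nn p)))*(etaR p θ 0 + etaR p θ 2 - etaR p θ 1 - etaR p θ 3) := by
    linear_combination h00 - h11 - 2*h02 + 2*h13 + h22 - h33
      + (etaR p θ 0-etaR p θ 1+etaR p θ 2-etaR p θ 3)*r0R + (2*etaR p θ 1+2*etaR p θ 3-2*etaR p θ 0-2*etaR p θ 2)*r1R - (etaR p θ 0-etaR p θ 1+etaR p θ 2-etaR p θ 3)*r2R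
  have t3 : 2*(etaR p θ 0-etaR p θ 2)*(etaR p θ 1-etaR p θ 3) = (2*((cz p θ 0 3 : ℕ) : ZMod (Nn p)) - 2*((cz p θ 0 1 : ℕ) : ZMod (Nn p)))*(etaR p θ 0 + etaR p θ 2 - etaR p θ 1 - etaR p θ 3) := by
    linear_combination 2*h01 - 2*h03 - 2*h12 + 2*h23
  have t4 : (etaR p θ 0 + etaR p θ 2 - etaR p θ 1 - etaR p θ 3)^2 = 4*((ff p : ℕ) : ZMod (Nn p))+1 := by
    linear_combination h00 + h11 + h22 + h33 - 2*h01 + 2*h02 - 2*h03 - 2*h12 + 2*h13 - 2*h23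
      + (etaR p θ 0+etaR p θ 1+etaR p θ 2+etaR p θ 3)*r0R - 2*(etaR p θ 0+etaR p θ 1+etaR p θ 2+etaR p θ 3)*r1R + (etaR p θ 0+etaR p θ 1+etaR p θ 2+etaR p θ 3)*r2R - hσ
  have hps : (4*((ff p : ℕ) : ZMod (Nn p))+1)^2 = ((2*((ff p : ℕ) : ZMod (Nn p)) - 1 - 8*((cz p θ 1 0 : ℕ) : ZMod (Nn p)))^2 + (2*((cz p θ 0 3 : ℕ) : ZMod (Nn p)) - 2*((cz p θ 0 1 : ℕ) : ZMod (Nn p)))^2)*(4*((ff p : ℕ) : ZMod (Nn p))+1) := by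
    linear_combination ((4*((ff p : ℕ) : ZMod (Nn p))+1) - ((etaR p θ 0-etaR p θ 2)^2+(etaR p θ 1-etaR p θ 3)^2))*t1
      + (((etaR p θ 0-etaR p θ 2)^2-(etaR p θ 1-etaR p θ 3)^2) - (2*((ff p : ℕ) : ZMod (Nn p)) - 1 - 8*((cz p θ 1 0 : ℕ) : ZMod (Nn p)))*(etaR p θ 0 + etaR p θ 2 - etaR p θ 1 - etaR p θ 3))*t2 + ((2*(etaR p θ 0-etaR p θ 2)*(etaR p θ 1-etaR p θ 3)) + (2*((cz p θ 0 3 : ℕ) : ZMod (Nn p)) - 2*((cz p θ 0 1 : ℕ) : ZMod (Nn p)))*(etaR p θ 0 + etaR p θ 2 - etaR p θ 1 - etaR p θ 3))*t3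
      + ((2*((ff p : ℕ) : ZMod (Nn p)) - 1 - 8*((cz p θ 1 0 : ℕ) : ZMod (Nn p)))^2+(2*((cz p θ 0 3 : ℕ) : ZMod (Nn p)) - 2*((cz p θ 0 1 : ℕ) : ZMod (Nn p)))^2)*t4
  have hpR : ((p : ℕ) : ZMod (Nn p)) = 4*((ff p : ℕ) : ZMod (Nn p)) + 1 := by
    have := congrArg (fun n : ℕ => (n : ZMod (Nn p))) (p_eq hp8)
    push_cast at this
    exact this
  have hw0 : ((((p:ℕ) : ℤ) * (((p:ℕ) : ℤ) - (2*((ff p : ℕ) : ℤ) - 1 - 8*((cz p θ 1 0 : ℕ) : ℤ))^2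
      - (2*((cz p θ 0 3 : ℕ) : ℤ) - 2*((cz p θ 0 1 : ℕ) : ℤ))^2) : ℤ) : ZMod (Nn p)) = 0 := by
    push_cast
    linear_combination hps + (((p:ℕ) : ZMod (Nn p)) + (4*((ff p : ℕ) : ZMod (Nn p))+1) - (2*((ff p : ℕ) : ZMod (Nn p)) - 1 - 8*((cz p θ 1 0 : ℕ) : ZMod (Nn p)))^2 - (2*((cz p θ 0 3 : ℕ) : ZMod (Nn p)) - 2*((cz p θ 0 1 : ℕ) : ZMod (Nn p)))^2)*hpR
  have hdvd1 := (ZMod.intCast_zmod_eq_zero_iff_dvd _ (Nn p)).mp hw0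
  have hNn1 : ((Nn p : ℕ) : ZMod p) = 1 := by
    have h3 : (3 : ZMod p) * ((Nn p : ℕ) : ZMod p) + 1 = 4 := by
      have := congrArg (fun n : ℕ => (n : ZMod p)) (three_Nn p)
      push_cast at this
      rw [this, show ((4:ZMod p))^p = 4 from ZMod.pow_card 4]
    have h30 : (3 : ZMod p) ≠ 0 := by
      intro h
      have h' : ((3:ℕ) : ZMod p) = 0 := by push_cast; exact h
      have := Nat.le_of_dvd (by norm_num) ((ZMod.natCast_eq_zero_iff 3 p).mp h')
      omega
    have hm : (3 : ZMod p) * ((Nn p : ℕ) : ZMod p) = 3 * 1 := by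
      rw [mul_one]
      linear_combination h3
    exact mul_left_cancel₀ h30 hm
  have hndvd : ¬ (p ∣ Nn p) := by
    intro h
    have h0 : ((Nn p : ℕ) : ZMod p) = 0 := (ZMod.natCast_eq_zero_iff _ _).mpr h
    rw [hNn1] at h0
    exact one_ne_zero h0
  have hcop : IsCoprime ((Nn p : ℕ) : ℤ) ((p : ℕ) : ℤ) :=
    Nat.isCoprime_iff_coprime.mpr ((hp.coprime_iff_not_dvd.mpr hndvd).symm)
  have hdvd2 : ((Nn p : ℕ) : ℤ) ∣ (((p:ℕ) : ℤ) - (2*((ff p : ℕ) : ℤ) - 1 - 8*((cz p θ 1 0 : ℕ) : ℤ))^2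
      - (2*((cz p θ 0 3 : ℕ) : ℤ) - 2*((cz p θ 0 1 : ℕ) : ℤ))^2) :=
    hcop.dvd_of_dvd_mul_left hdvd1
  have hNn_big : 40*(ff p)^2 + 16*(ff p) + 2 < Nn p := by
    have h2 : (4:ℕ)^(p-1) ≤ Nn p := by
      unfold Nn
      exact Finset.single_le_sum (fun i _ => Nat.zero_le _) (Finset.mem_range.mpr (by omega))
    have h3 : (4:ℕ)^(p-1) = 256^(ff p) := by
      rw [show p - 1 = 4 * ff p by have := p_eq hp8; omega, pow_mul]
      norm_num
    have := pow_grow (ff p) (ff_pos hp8)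
    omega
  have hwzero : (((p:ℕ) : ℤ) - (2*((ff p : ℕ) : ℤ) - 1 - 8*((cz p θ 1 0 : ℕ) : ℤ))^2
      - (2*((cz p θ 0 3 : ℕ) : ℤ) - 2*((cz p θ 0 1 : ℕ) : ℤ))^2) = 0 := by
    apply Int.eq_zero_of_abs_lt_dvd hdvd2
    have hfZ : (1:ℤ) ≤ ((ff p : ℕ) : ℤ) := by exact_mod_cast ff_pos hp8
    have hEZ : (0:ℤ) ≤ ((cz p θ 1 0 : ℕ) : ℤ) := Int.natCast_nonneg _
    have hEZ2 : ((cz p θ 1 0 : ℕ) : ℤ) ≤ ((ff p : ℕ) : ℤ) := by exact_mod_cast cz_le hp8 hθ 1 0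
    have hBZ : (0:ℤ) ≤ ((cz p θ 0 1 : ℕ) : ℤ) := Int.natCast_nonneg _
    have hBZ2 : ((cz p θ 0 1 : ℕ) : ℤ) ≤ ((ff p : ℕ) : ℤ) := by exact_mod_cast cz_le hp8 hθ 0 1
    have hDZ : (0:ℤ) ≤ ((cz p θ 0 3 : ℕ) : ℤ) := Int.natCast_nonneg _
    have hDZ2 : ((cz p θ 0 3 : ℕ) : ℤ) ≤ ((ff p : ℕ) : ℤ) := by exact_mod_cast cz_le hp8 hθ 0 3
    have hNZ : 40*((ff p : ℕ):ℤ)^2 + 16*((ff p : ℕ):ℤ) + 2 < ((Nn p : ℕ) : ℤ) := by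
      exact_mod_cast hNn_big
    have hpZ : ((p:ℕ) : ℤ) = 4*((ff p : ℕ):ℤ) + 1 := by exact_mod_cast p_eq hp8
    have hU1 : (2*((ff p : ℕ) : ℤ) - 1 - 8*((cz p θ 1 0 : ℕ) : ℤ)) ≤ 6*((ff p : ℕ):ℤ) + 1 := by
      linarith
    have hU2 : -(6*((ff p : ℕ):ℤ) + 1) ≤ (2*((ff p : ℕ) : ℤ) - 1 - 8*((cz p θ 1 0 : ℕ) : ℤ)) := by
      linarith
    have hV1 : (2*((cz p θ 0 3 : ℕ) : ℤ) - 2*((cz p θ 0 1 : ℕ) : ℤ)) ≤ 2*((ff p : ℕ):ℤ) := by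
      linarith
    have hV2 : -(2*((ff p : ℕ):ℤ)) ≤ (2*((cz p θ 0 3 : ℕ) : ℤ) - 2*((cz p θ 0 1 : ℕ) : ℤ)) := by
      linarith
    rw [abs_lt]
    constructor
    · nlinarith [mul_nonneg (by linarith : (0:ℤ) ≤ 6*((ff p : ℕ):ℤ) + 1 - (2*((ff p : ℕ) : ℤ) - 1 - 8*((cz p θ 1 0 : ℕ) : ℤ))) (by linarith : (0:ℤ) ≤ 6*((ff p : ℕ):ℤ) + 1 + (2*((ff p : ℕ) : ℤ) - 1 - 8*((cz p θ 1 0 : ℕ) : ℤ))),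
        mul_nonneg (by linarith : (0:ℤ) ≤ 2*((ff p : ℕ):ℤ) - (2*((cz p θ 0 3 : ℕ) : ℤ) - 2*((cz p θ 0 1 : ℕ) : ℤ))) (by linarith : (0:ℤ) ≤ 2*((ff p : ℕ):ℤ) + (2*((cz p θ 0 3 : ℕ) : ℤ) - 2*((cz p θ 0 1 : ℕ) : ℤ)))]
    · nlinarith [sq_nonneg (2*((ff p : ℕ) : ℤ) - 1 - 8*((cz p θ 1 0 : ℕ) : ℤ)),
        sq_nonneg (2*((cz p θ 0 3 : ℕ) : ℤ) - 2*((cz p θ 0 1 : ℕ) : ℤ)), sq_nonneg ((ff p : ℕ):ℤ)]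
  linarith [hwzero]

end Quad

section Final

variable (hp : p.Prime) (hp8 : p % 8 = 5) (hθ : IsPrimitiveRoot (θ : ZMod p) (p - 1))

include hp hp8 hθ

lemma E16 (x y : ℤ) (hx : x % 4 = 1) (hxy : (p:ℤ) = x^2 + 4*y^2) :
    16*((cz p θ 1 0 : ℕ) : ℤ) = (p:ℤ) - 3 - 2*x := by
  have hq := key_sq hp hp8 hθ
  have hpInt : Prime ((p:ℕ) : ℤ) := Nat.prime_iff_prime_int.mp hp
  have hppos : (0:ℤ) < (p:ℕ) := by exact_mod_cast hp.pos
  have hpodd : ((p:ℕ):ℤ) % 2 = 1 := by omega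
  have hfodd : ff p % 2 = 1 := ff_odd hp8
  have hUodd : (2*((ff p : ℕ):ℤ) - 1 - 8*((cz p θ 1 0 : ℕ) : ℤ)) % 2 = 1 := by omega
  have hxodd : x % 2 = 1 := by omega
  have hx2 : x^2 + (2*y)^2 = ((p:ℕ):ℤ) := by linear_combination -hxy
  have hU2 := two_sq_unique hpInt hppos hpodd hq hx2 hUodd hxodd
  have hfac : ((2*((ff p : ℕ):ℤ) - 1 - 8*((cz p θ 1 0 : ℕ) : ℤ)) - x)
      * ((2*((ff p : ℕ):ℤ) - 1 - 8*((cz p θ 1 0 : ℕ) : ℤ)) + x) = 0 := by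
    linear_combination hU2
  have hpZ : ((p:ℕ) : ℤ) = 4*((ff p : ℕ):ℤ) + 1 := by exact_mod_cast p_eq hp8
  rcases mul_eq_zero.mp hfac with h | h
  · omega
  · exfalso
    have hU4 : (2*((ff p : ℕ):ℤ) - 1 - 8*((cz p θ 1 0 : ℕ) : ℤ)) % 4 = 1 := by omega
    omega

omit hp hθ in
lemma cycD_eq (i : ℕ) : cycD p θ i = (Dz p θ i).image ZMod.val := by
  haveI : NeZero p := ⟨by omega⟩
  unfold cycD Dz ff
  rw [Finset.image_image]
  apply Finset.image_congr
  intro j _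
  show θ ^ (i + 4*j) % p = ((θ : ZMod p) ^ (i + 4*j)).val
  rw [← Nat.cast_pow, ZMod.val_natCast]

omit hp hθ in
lemma eta_cast (i : ℕ) : ((eta4 p θ i : ℤ) : ZMod (Nn p)) = etaR p θ i := by
  haveI : NeZero p := ⟨by omega⟩
  unfold eta4 etaR
  push_cast
  rw [cycD_eq hp8 i, Finset.sum_image (fun x _ y _ h => ZMod.val_injective p h)]
  rfl

omit hp hθ in
lemma card_link :
    ((cycD p θ 0).filter (fun a => (a+1) % p ∈ cycD p θ 1)).card = cz p θ 0 1 := by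
  classical
  haveI : NeZero p := ⟨by omega⟩
  haveI : Fact (1 < p) := ⟨by omega⟩
  rw [cycD_eq hp8 0, cycD_eq hp8 1, Finset.filter_image,
    Finset.card_image_of_injective _ (ZMod.val_injective p)]
  unfold cz
  congr 1
  apply Finset.filter_congr
  intro z hz
  have hval : (z.val + 1) % p = (z + 1).val := by
    rw [ZMod.val_add, ZMod.val_one]
  rw [hval]
  constructor
  · intro h
    obtain ⟨w, hw, hwv⟩ := Finset.mem_image.mp h
    rwa [ZMod.val_injective p hwv] at hw
  · intro h
    exact Finset.mem_image.mpr ⟨z+1, h, rfl⟩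

set_option maxHeartbeats 2000000 in
lemma main_identity (x y : ℤ) (hx : x % 4 = 1) (hxy : (p:ℤ) = x^2 + 4*y^2)
    (hhyZ : 16*((cz p θ 0 1 : ℕ) : ℤ) = (p:ℤ) + 1 + 2*x - 8*y) :
    4*(1 + etaR p θ 3 + 2*etaR p θ 0 + 3*etaR p θ 1)*(1 + etaR p θ 1 + 2*etaR p θ 2 + 3*etaR p θ 3)
      = 2*(1 - 4*((y:ℤ) : ZMod (Nn p)))*(etaR p θ 0 + etaR p θ 2 - etaR p θ 1 - etaR p θ 3) + 5*((p:ℕ) : ZMod (Nn p)) + 1 := by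
  classical
  haveI : Fact p.Prime := ⟨hp⟩
  have h01 := prod_formula hp hp8 hθ 0 1 (by norm_num) (by norm_num)
  have h02 := prod_formula hp hp8 hθ 0 2 (by norm_num) (by norm_num)
  have h03 := prod_formula hp hp8 hθ 0 3 (by norm_num) (by norm_num)
  have h11 := prod_formula hp hp8 hθ 1 1 (by norm_num) (by norm_num)
  have h12 := prod_formula hp hp8 hθ 1 2 (by norm_num) (by norm_num)
  have h13 := prod_formula hp hp8 hθ 1 3 (by norm_num) (by norm_num)
  have h23 := prod_formula hp hp8 hθ 2 3 (by norm_num) (by norm_num)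
  have h33 := prod_formula hp hp8 hθ 3 3 (by norm_num) (by norm_num)
  norm_num [Finset.sum_range_succ] at h01 h02 h03 h11 h12 h13 h23 h33
  rw [cz11 hp hp8 hθ, cz12 hp hp8 hθ, cz13 hp hp8 hθ] at h01 h12 h23
  rw [cz20 hp hp8 hθ, cz21 hp hp8 hθ, cz22 hp hp8 hθ, cz23 hp hp8 hθ] at h02 h13
  rw [cz30 hp hp8 hθ, cz31 hp hp8 hθ, cz32 hp hp8 hθ, cz33 hp hp8 hθ] at h03
  have hσ := sum_etaR hp hp8 hθ
  have r0 := row_sum hp hp8 hθ (show (0:ℕ) < 4 by norm_num)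
  have r1 := row_sum hp hp8 hθ (show (1:ℕ) < 4 by norm_num)
  have r2 := row_sum hp hp8 hθ (show (2:ℕ) < 4 by norm_num)
  norm_num at r0 r1 r2
  rw [cz11 hp hp8 hθ, cz12 hp hp8 hθ, cz13 hp hp8 hθ] at r1
  rw [cz20 hp hp8 hθ, cz21 hp hp8 hθ, cz22 hp hp8 hθ, cz23 hp hp8 hθ] at r2
  have r0R := congrArg (fun n : ℕ => (n : ZMod (Nn p))) r0
  have r1R := congrArg (fun n : ℕ => (n : ZMod (Nn p))) r1
  have r2R := congrArg (fun n : ℕ => (n : ZMod (Nn p))) r2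
  push_cast at r0R r1R r2R
  have hpR : ((p : ℕ) : ZMod (Nn p)) = 4*((ff p : ℕ) : ZMod (Nn p)) + 1 := by
    have := congrArg (fun n : ℕ => (n : ZMod (Nn p))) (p_eq hp8)
    push_cast at this
    exact this
  have hER := congrArg (fun n : ℤ => (n : ZMod (Nn p))) (E16 hp hp8 hθ x y hx hxy)
  have hhyR := congrArg (fun n : ℤ => (n : ZMod (Nn p))) hhyZ
  push_cast at hER hhyR
  linear_combination (8:ZMod (Nn p))*h01 + 16*h02 + 24*h03 + 12*h11 + 24*h12 + 40*h13 + 8*h23 + 12*h33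
    + (etaR p θ 0 - etaR p θ 1 + etaR p θ 2 - etaR p θ 3)*hhyR + (etaR p θ 0 - etaR p θ 1 + etaR p θ 2 - etaR p θ 3)*hER
    + (2*etaR p θ 0 - 2*etaR p θ 1 + 2*etaR p θ 2 - 2*etaR p θ 3 - 5)*hpR
    + (12*etaR p θ 1 + 12*etaR p θ 3)*r0R + (20*etaR p θ 0 + 12*etaR p θ 1 + 20*etaR p θ 2 + 12*etaR p θ 3)*r1R
    - (36 + 28*etaR p θ 0 + 16*etaR p θ 1 + 28*etaR p θ 2 + 16*etaR p θ 3)*r2R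
    + (34 + 72*((cz p θ 1 0 : ℕ) : ZMod (Nn p)) + 72*((cz p θ 0 0 : ℕ) : ZMod (Nn p)))*hσ

end Final

end L5

theorem lemma5_part6
    (p : ℕ) (hp : p.Prime) (hp8 : p % 8 = 5)
    (x y : ℤ) (hx : x % 4 = 1) (hxy : (p : ℤ) = x ^ 2 + 4 * y ^ 2)
    (θ : ℕ) (hθ : IsPrimitiveRoot (θ : ZMod p) (p - 1))
    (hy : 16 * (((cycD p θ 0).filter (fun a => (a + 1) % p ∈ cycD p θ 1)).card : ℤ)
        = (p : ℤ) + 1 + 2 * x - 8 * y)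
    :
    4 * (1 + eta4 p θ 3 + 2 * eta4 p θ 0 + 3 * eta4 p θ 1) * (1 + eta4 p θ 1 + 2 * eta4 p θ 2 + 3 * eta4 p θ 3)
      ≡ 2 * (1 - 4 * y) * Hval p θ + 5 * (p : ℤ) + 1 [ZMOD ((4 : ℤ) ^ p - 1) / 3] := by
  haveI : Fact p.Prime := ⟨hp⟩
  have hmod : ((4:ℤ)^p - 1)/3 = ((L5.Nn p : ℕ) : ℤ) := by
    have h3 : (3:ℤ) * ((L5.Nn p : ℕ) : ℤ) = 4^p - 1 := by
      have := congrArg (fun n : ℕ => (n : ℤ)) (L5.three_Nn p)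
      push_cast at this
      linarith
    rw [← h3, Int.mul_ediv_cancel_left _ (by norm_num)]
  rw [show ((4:ℤ)^p - 1)/3 = ((L5.Nn p : ℕ) : ℤ) from hmod]
  apply (ZMod.intCast_eq_intCast_iff _ _ _).mp
  have hhyZ : 16*((L5.cz p θ 0 1 : ℕ) : ℤ) = (p:ℤ) + 1 + 2*x - 8*y := by
    rw [← L5.card_link hp8]
    exact hy
  have key := L5.main_identity hp hp8 hθ x y hx (by linarith [hxy] : (p:ℤ) = x^2 + 4*y^2) hhyZ
  have e0 := L5.eta_cast (θ := θ) hp8 0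
  have e1 := L5.eta_cast (θ := θ) hp8 1
  have e2 := L5.eta_cast (θ := θ) hp8 2
  have e3 := L5.eta_cast (θ := θ) hp8 3
  simp only [Hval]
  push_cast
  rw [e0, e1, e2, e3]
  linear_combination key
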